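/- arXiv:2604.20566 — 6 statements merged into one kernel-verified Lean document; each statement's English description precedes it below -/
import Mathlib

section
/- Let Λ ∈ ℤⁿ (n=p+q) have strictly decreasing first p coordinates and strictly decreasing last q coordinates, with the first p' coordinates forming a string (consecutive integers decreasing by 1) and the last q' coordinates forming a string, and suppose Λ_{p'} ≤ Λ_{n-q'+1} + 1. If no integer occurs more than once among all n coordinates of Λ, then either Λ_1 < Λ_n, or the concatenated sequence Λ_1, ..., Λ_{p'}, Λ_{n-q'+1}, ..., Λ_n is a single string of consecutive integers decreasing by 1. -/
/-!
If the concatenation is not a string, regularity and unitarity force `Λ_{p'} < Λ_{n-q'+1}`.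
If moreover `Λ_n ≤ Λ_1`, the value sets `[Λ_{p'}, Λ_1]` and `[Λ_n, Λ_{n-q'+1}]` of the two strings
are overlapping integer intervals, so some value (e.g. `max Λ_{p'} Λ_n`) is taken in both strings,
contradicting regularity.
-/

section String

variable {f : ℕ → ℤ} {a b : ℕ}

theorem apply_eq_sub_of_string (h : ∀ i, a ≤ i → i < b → f (i + 1) = f i - 1)
    {i : ℕ} (hai : a ≤ i) (hib : i ≤ b) : f i = f a - ((i : ℤ) - a) := by
  induction i, hai using Nat.le_induction with
  | base => simp
  | succ k hak ih =>
    rw [h k hak (by omega), ih (by omega)]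
    push_cast
    ring

theorem exists_apply_eq_of_string (h : ∀ i, a ≤ i → i < b → f (i + 1) = f i - 1)
    (hab : a ≤ b) {v : ℤ} (hbv : f b ≤ v) (hva : v ≤ f a) :
    ∃ i, a ≤ i ∧ i ≤ b ∧ f i = v := by
  have hfb := apply_eq_sub_of_string h hab le_rfl
  refine ⟨a + (f a - v).toNat, by omega, by omega, ?_⟩
  rw [apply_eq_sub_of_string h (by omega) (by omega)]
  push_cast
  omega

end String

theorem stmt1_general (p q p' q' n : ℕ) (hn : n = p + q)
    (hp' : 1 ≤ p') (hp'p : p' ≤ p) (hq' : 1 ≤ q') (hq'q : q' ≤ q)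
    (Λ : ℕ → ℤ)
    (hpstr : ∀ i, 1 ≤ i → i < p' → Λ (i + 1) = Λ i - 1)
    (hqstr : ∀ i, n - q' + 1 ≤ i → i < n → Λ (i + 1) = Λ i - 1)
    (hunit : Λ p' ≤ Λ (n - q' + 1) + 1)
    (hreg : ∀ i j, 1 ≤ i → i ≤ n → 1 ≤ j → j ≤ n → Λ i = Λ j → i = j) :
    Λ 1 < Λ n ∨ Λ (n - q' + 1) = Λ p' - 1 := by
  by_contra! ⟨hn1, hconcat⟩
  have hne : Λ p' ≠ Λ (n - q' + 1) := fun h => by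
    have := hreg _ _ (by omega) (by omega) (by omega) (by omega) h
    omega
  have hΛp' := apply_eq_sub_of_string hpstr hp' le_rfl
  have hΛn := apply_eq_sub_of_string hqstr (show n - q' + 1 ≤ n by omega) le_rfl
  obtain ⟨i, hi1, hip', hi⟩ :=
    exists_apply_eq_of_string hpstr hp' (le_max_left (Λ p') (Λ n)) (max_le (by omega) hn1)
  obtain ⟨j, hjm, hjn, hj⟩ := exists_apply_eq_of_string hqstr (show n - q' + 1 ≤ n by omega)
    (le_max_right (Λ p') (Λ n)) (max_le (by omega) (by omega))
  have := hreg i j (by omega) (by omega) (by omega) hjn (hi.trans hj.symm)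
  omega

/-- Regular case: either Λ_1 < Λ_n, or the p'-string and q'-string concatenate to one string. -/
theorem stmt1 (p q p' q' n : ℕ) (hn : n = p + q)
    (hp : 1 ≤ p) (hq : 1 ≤ q)
    (hp' : 1 ≤ p') (hp'p : p' ≤ p) (hq' : 1 ≤ q') (hq'q : q' ≤ q)
    (Λ : ℕ → ℤ)
    (hL : ∀ i j, 1 ≤ i → i < j → j ≤ p → Λ j < Λ i)
    (hR : ∀ i j, p + 1 ≤ i → i < j → j ≤ n → Λ j < Λ i)
    (hpstr : ∀ i, 1 ≤ i → i < p' → Λ (i + 1) = Λ i - 1)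
    (hqstr : ∀ i, n - q' + 1 ≤ i → i < n → Λ (i + 1) = Λ i - 1)
    (hunit : Λ p' ≤ Λ (n - q' + 1) + 1)
    (hreg : ∀ i j, 1 ≤ i → i ≤ n → 1 ≤ j → j ≤ n → Λ i = Λ j → i = j) :
    Λ 1 < Λ n ∨ Λ (n - q' + 1) = Λ p' - 1 :=
  stmt1_general p q p' q' n hn hp' hp'p hq' hq'q Λ hpstr hqstr hunit hreg
end

section
/- Let Λ ∈ ℤⁿ (n=p+q) with strictly decreasing left block Λ_1 > ... > Λ_p and strictly decreasing right block Λ_{p+1} > ... > Λ_n; suppose each integer value occurs at most twice among the coordinates, at least one value occurs twice, and Λ_{p'} ≤ Λ_{n-q'+1} + 1. If the p'-string and q'-string (as sets) are disjoint, then the concatenation Λ_1, ..., Λ_{p'}, Λ_{n-q'+1}, ..., Λ_n is a string of distinct consecutive integers decreasing by 1. -/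
/-!
Suppose the conclusion fails, so that `Λ p' < Λ (n - q' + 1)` by disjointness. A string takes
every value between its endpoints, so disjointness forces the `q'`-string to start above `Λ 1`
and the `p'`-string to end below `Λ n`. The repeated value `Λ i = Λ j` (necessarily `i ≤ p < j`)
then lies above `Λ p'` and below `Λ (n - q' + 1)`, which puts `i` into the `p'`-string and `j`
into the `q'`-string, contradicting disjointness.
-/

theorem exists_eq_of_forall_succ_eq_sub_one {f : ℕ → ℤ} {a b : ℕ}
    (hf : ∀ i, a ≤ i → i < b → f (i + 1) = f i - 1) {v : ℤ} (hva : v ≤ f a) (hvb : f b ≤ v)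
    (hab : a ≤ b) : ∃ k, a ≤ k ∧ k ≤ b ∧ f k = v := by
  induction b, hab using Nat.le_induction with
  | base => exact ⟨a, le_rfl, le_rfl, le_antisymm hvb hva⟩
  | succ b hab ih =>
    have hstep := hf b hab b.lt_succ_self
    rcases eq_or_lt_of_le hvb with hv | hv
    · exact ⟨b + 1, by omega, le_rfl, hv⟩
    · obtain ⟨k, hak, hkb, hk⟩ :=
        ih (fun i hai hib => hf i hai (by omega)) (by omega)
      exact ⟨k, hak, by omega, hk⟩

theorem stmt2_general (p q p' q' n : ℕ) (hn : n = p + q)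
    (hp' : 1 ≤ p') (hp'p : p' ≤ p) (hq' : 1 ≤ q') (hq'q : q' ≤ q)
    (Λ : ℕ → ℤ)
    (hL : ∀ i j, 1 ≤ i → i < j → j ≤ p → Λ j < Λ i)
    (hR : ∀ i j, p + 1 ≤ i → i < j → j ≤ n → Λ j < Λ i)
    (hpstr : ∀ i, 1 ≤ i → i < p' → Λ (i + 1) = Λ i - 1)
    (hqstr : ∀ i, n - q' + 1 ≤ i → i < n → Λ (i + 1) = Λ i - 1)
    (hsing : ∃ i j, 1 ≤ i ∧ i < j ∧ j ≤ n ∧ Λ i = Λ j)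
    (hdisj : ∀ i j, 1 ≤ i → i ≤ p' → n - q' + 1 ≤ j → j ≤ n → Λ i ≠ Λ j)
    (hunit : Λ p' ≤ Λ (n - q' + 1) + 1) :
    Λ (n - q' + 1) = Λ p' - 1 := by
  set a := n - q' + 1
  have hLanti : StrictAntiOn Λ (Set.Icc 1 p) := fun i hi j hj hij => hL i j hi.1 hij hj.2
  have hRanti : StrictAntiOn Λ (Set.Icc (p + 1) n) := fun i hi j hj hij => hR i j hi.1 hij hj.2
  by_contra hne
  have hp'a : Λ p' ≤ Λ a := by omega
  have h1a : Λ 1 < Λ a := by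
    by_contra! h
    obtain ⟨k, hk1, hkp', hk⟩ := exists_eq_of_forall_succ_eq_sub_one hpstr h hp'a hp'
    exact hdisj k a hk1 hkp' le_rfl (by omega) hk
  have hp'n : Λ p' < Λ n := by
    by_contra! h
    obtain ⟨k, hak, hkn, hk⟩ := exists_eq_of_forall_succ_eq_sub_one hqstr hp'a h (by omega)
    exact hdisj p' k hp' le_rfl hak hkn hk.symm
  obtain ⟨i, j, hi1, hij, hjn, hij_eq⟩ := hsing
  have hip : i ≤ p := by
    by_contra! h
    exact (hR i j (by omega) hij hjn).ne hij_eq.symm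
  have hpj : p + 1 ≤ j := by
    by_contra! h
    exact (hL i j hi1 hij (by omega)).ne hij_eq.symm
  have hip' : i ≤ p' := by
    have hnj : Λ n ≤ Λ j := hRanti.antitoneOn ⟨hpj, hjn⟩ ⟨by omega, le_rfl⟩ hjn
    exact (hLanti.le_iff_ge ⟨hp', hp'p⟩ ⟨hi1, hip⟩).mp (by omega)
  have haj : a ≤ j := by
    have hi1' : Λ i ≤ Λ 1 := hLanti.antitoneOn ⟨le_rfl, by omega⟩ ⟨hi1, hip⟩ hi1
    exact (hRanti.le_iff_ge ⟨hpj, hjn⟩ ⟨by omega, by omega⟩).mp (by omega)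
  exact hdisj i j hi1 hip' haj hjn hij_eq

/-- Singular case: if the p'-string and q'-string are disjoint, their concatenation is a string. -/
theorem stmt2 (p q p' q' n : ℕ) (hn : n = p + q)
    (hp : 1 ≤ p) (hq : 1 ≤ q)
    (hp' : 1 ≤ p') (hp'p : p' ≤ p) (hq' : 1 ≤ q') (hq'q : q' ≤ q)
    (Λ : ℕ → ℤ)
    (hL : ∀ i j, 1 ≤ i → i < j → j ≤ p → Λ j < Λ i)
    (hR : ∀ i j, p + 1 ≤ i → i < j → j ≤ n → Λ j < Λ i)
    (hpstr : ∀ i, 1 ≤ i → i < p' → Λ (i + 1) = Λ i - 1)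
    (hqstr : ∀ i, n - q' + 1 ≤ i → i < n → Λ (i + 1) = Λ i - 1)
    (htwice : ∀ i j k, 1 ≤ i → i < j → j < k → k ≤ n → ¬(Λ i = Λ j ∧ Λ j = Λ k))
    (hsing : ∃ i j, 1 ≤ i ∧ i < j ∧ j ≤ n ∧ Λ i = Λ j)
    (hdisj : ∀ i j, 1 ≤ i → i ≤ p' → n - q' + 1 ≤ j → j ≤ n → Λ i ≠ Λ j)
    (hunit : Λ p' ≤ Λ (n - q' + 1) + 1) :
    Λ (n - q' + 1) = Λ p' - 1 :=
  stmt2_general p q p' q' n hn hp' hp'p hq' hq'q Λ hL hR hpstr hqstr hsing hdisj hunit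
end

section
/- Let Λ ∈ ℤⁿ be a singular su(p,q) parameter satisfying the unitarity condition Λ_{p'} - Λ_{n-q'+1} ≤ 1, with strictly decreasing left and right blocks. Then every integer value that occurs twice among the coordinates of Λ occurs in the union of the p'-string and the q'-string. -/
/-!
An integer occurring twice in `Λ` is hit once in each block, since both blocks are strictly
decreasing. If neither occurrence lay in its string, strict monotonicity would place the value
strictly between `Λ (n - q' + 1)` and `Λ p'`, which the unitarity bound
`Λ p' ≤ Λ (n - q' + 1) + 1` leaves no room for.
-/

lemma le_and_succ_le_of_eq_of_strictAntiOn {α : Type*} [Preorder α] {f : ℕ → α}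
    {p n i j : ℕ} (hL : StrictAntiOn f (Set.Icc 1 p)) (hR : StrictAntiOn f (Set.Icc (p + 1) n))
    (hi : 1 ≤ i) (hij : i < j) (hjn : j ≤ n) (hfij : f i = f j) : i ≤ p ∧ p + 1 ≤ j := by
  have hpj : p + 1 ≤ j := by
    by_contra h
    exact hij.ne (hL.injOn ⟨hi, by omega⟩ ⟨by omega, by omega⟩ hfij)
  refine ⟨?_, hpj⟩
  by_contra h
  exact hij.ne (hR.injOn ⟨by omega, by omega⟩ ⟨by omega, hjn⟩ hfij)

theorem stmt3_general (p p' q' n : ℕ)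
    (hp' : 1 ≤ p') (hq' : 1 ≤ q')
    (Λ : ℕ → ℤ)
    (hL : ∀ i j, 1 ≤ i → i < j → j ≤ p → Λ j < Λ i)
    (hR : ∀ i j, p + 1 ≤ i → i < j → j ≤ n → Λ j < Λ i)
    (hunit : Λ p' ≤ Λ (n - q' + 1) + 1) :
    ∀ v : ℤ, ∀ i j, 1 ≤ i → i < j → j ≤ n → Λ i = v → Λ j = v →
      ∃ k, ((1 ≤ k ∧ k ≤ p') ∨ (n - q' + 1 ≤ k ∧ k ≤ n)) ∧ Λ k = v := by
  intro v i j hi hij hjn hiv hjv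
  obtain ⟨hip, hpj⟩ := le_and_succ_le_of_eq_of_strictAntiOn
    (fun a ha b hb hab => hL a b ha.1 hab hb.2) (fun a ha b hb hab => hR a b ha.1 hab hb.2)
    hi hij hjn (hiv.trans hjv.symm)
  by_cases hip' : i ≤ p'
  · exact ⟨i, Or.inl ⟨hi, hip'⟩, hiv⟩
  by_cases hjq' : n - q' + 1 ≤ j
  · exact ⟨j, Or.inr ⟨hjq', hjn⟩, hjv⟩
  have hv_lt : Λ i < Λ p' := hL p' i hp' (by omega) hip
  have hlt_v : Λ (n - q' + 1) < Λ j := hR j (n - q' + 1) hpj (by omega) (by omega)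
  omega

/-- Every repeated value occurs in the union of the p'-string and the q'-string. -/
theorem stmt3 (p q p' q' n : ℕ) (hn : n = p + q)
    (hp : 1 ≤ p) (hq : 1 ≤ q)
    (hp' : 1 ≤ p') (hp'p : p' ≤ p) (hq' : 1 ≤ q') (hq'q : q' ≤ q)
    (Λ : ℕ → ℤ)
    (hL : ∀ i j, 1 ≤ i → i < j → j ≤ p → Λ j < Λ i)
    (hR : ∀ i j, p + 1 ≤ i → i < j → j ≤ n → Λ j < Λ i)
    (hpstr : ∀ i, 1 ≤ i → i < p' → Λ (i + 1) = Λ i - 1)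
    (hqstr : ∀ i, n - q' + 1 ≤ i → i < n → Λ (i + 1) = Λ i - 1)
    (hsing : ∃ i j, 1 ≤ i ∧ i < j ∧ j ≤ n ∧ Λ i = Λ j)
    (hunit : Λ p' ≤ Λ (n - q' + 1) + 1) :
    ∀ v : ℤ, ∀ i j, 1 ≤ i → i < j → j ≤ n → Λ i = v → Λ j = v →
      ∃ k, ((1 ≤ k ∧ k ≤ p') ∨ (n - q' + 1 ≤ k ∧ k ≤ n)) ∧ Λ k = v :=
  stmt3_general p p' q' n hp' hq' Λ hL hR hunit
end

section
/- Let Λ^dom ∈ ℤⁿ with Λ^dom_1 ≥ ... ≥ Λ^dom_{n-1} ≥ |Λ^dom_n|, all coordinates integers, suppose 0 is not a coordinate, and suppose at least two distinct values are repeated among Λ^dom_1, ..., Λ^dom_{n-1}, |Λ^dom_n|. Then there is no strictly decreasing Λ ∈ ℤⁿ whose multiset of absolute values of coordinates equals that of Λ^dom and which has at most one positive coordinate. -/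
/-!
Strict monotonicity makes `Λ` injective, so an absolute value `a > 0` occurring twice among the
`|Λ i|` must occur as both `a` and `-a`; in particular `Λ` takes the positive value `a`. Two distinct
repeated absolute values therefore give two positive coordinates.
-/

lemma Finset.count_map_val_eq_card_filter {α β : Type*} [DecidableEq β] (s : Finset α)
    (f : α → β) (b : β) : (s.val.map f).count b = (s.filter (fun i => b = f i)).card := by
  rw [Multiset.count_map, Finset.card_def, Finset.filter_val]

lemma Finset.two_le_count_map_val {α β : Type*} [DecidableEq β] {s : Finset α} {f : α → β}
    {i j : α} (hi : i ∈ s) (hj : j ∈ s) (hij : i ≠ j) (hf : f i = f j) :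
    2 ≤ (s.val.map f).count (f i) := by
  classical
  rw [Finset.count_map_val_eq_card_filter, ← Finset.card_pair hij]
  refine Finset.card_le_card fun x hx => ?_
  rcases Finset.mem_insert.mp hx with rfl | hx
  · exact Finset.mem_filter.mpr ⟨hi, rfl⟩
  · rw [Finset.mem_singleton.mp hx]
    exact Finset.mem_filter.mpr ⟨hj, hf⟩

lemma Set.InjOn.exists_eq_of_two_le_count_abs {α : Type*} {s : Finset α} {Λ : α → ℤ}
    (hinj : Set.InjOn Λ s) {a : ℤ} (ha : 0 < a)
    (hcount : 2 ≤ (s.val.map fun i => |Λ i|).count a) : ∃ p ∈ s, Λ p = a := by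
  rw [Finset.count_map_val_eq_card_filter] at hcount
  obtain ⟨p, hp, q, hq, hpq⟩ := Finset.one_lt_card.mp hcount
  rw [Finset.mem_filter] at hp hq
  have hΛ : Λ p ≠ Λ q := fun h => hpq (hinj hp.1 hq.1 h)
  rcases (abs_eq ha.le).mp hp.2.symm with hpa | hpa
  · exact ⟨p, hp.1, hpa⟩
  · rcases (abs_eq ha.le).mp hq.2.symm with hqa | hqa
    · exact ⟨q, hq.1, hqa⟩
    · exact absurd (hpa.trans hqa.symm) hΛ

theorem stmt14_general (n : ℕ) (Λdom : ℕ → ℤ)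
    (hzero : ∀ i, 1 ≤ i → i ≤ n → Λdom i ≠ 0)
    (hrep : ∃ i j k l, 1 ≤ i ∧ i < j ∧ j ≤ n ∧ 1 ≤ k ∧ k < l ∧ l ≤ n ∧
      |Λdom i| = |Λdom j| ∧ |Λdom k| = |Λdom l| ∧ |Λdom i| ≠ |Λdom k|) :
    ¬ ∃ Λ : ℕ → ℤ,
      (∀ i j, 1 ≤ i → i < j → j ≤ n → Λ j < Λ i) ∧
      ((Finset.Icc 1 n).val.map (fun i => |Λ i|) =
        (Finset.Icc 1 n).val.map (fun i => |Λdom i|)) ∧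
      ((Finset.Icc 1 n).filter (fun i => 0 < Λ i)).card ≤ 1 := by
  rintro ⟨Λ, hdec, hmul, hpos⟩
  obtain ⟨i, j, k, l, hi1, hij, hjn, hk1, hkl, hln, hija, hkla, hne⟩ := hrep
  have hinj : Set.InjOn Λ (Finset.Icc 1 n) := by
    rw [Finset.coe_Icc]
    exact StrictAntiOn.injOn fun x hx y hy hxy => hdec x y hx.1 hxy hy.2
  have habs_pos : ∀ i, 1 ≤ i → i ≤ n → 0 < |Λdom i| := fun i hi hin =>
    abs_pos.mpr (hzero i hi hin)
  have positive_value_of_repeat : ∀ i j, 1 ≤ i → i < j → j ≤ n → |Λdom i| = |Λdom j| →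
      ∃ p ∈ (Finset.Icc 1 n).filter (fun i => 0 < Λ i), Λ p = |Λdom i| := by
    intro i j hi hij hjn heq
    have hcount : 2 ≤ ((Finset.Icc 1 n).val.map fun i => |Λ i|).count |Λdom i| := by
      rw [hmul]
      exact Finset.two_le_count_map_val (by simp; omega) (by simp; omega) hij.ne heq
    obtain ⟨p, hp, hpa⟩ := hinj.exists_eq_of_two_le_count_abs (habs_pos i hi (by omega)) hcount
    exact ⟨p, Finset.mem_filter.mpr ⟨hp, hpa ▸ habs_pos i hi (by omega)⟩, hpa⟩
  obtain ⟨p, hp, hpa⟩ := positive_value_of_repeat i j hi1 hij hjn hija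
  obtain ⟨q, hq, hqa⟩ := positive_value_of_repeat k l hk1 hkl hln hkla
  have hpq : p ≠ q := fun h => hne (by rw [← hpa, ← hqa, h])
  have htwo := Finset.one_lt_card.mpr ⟨p, hp, q, hq, hpq⟩
  omega

/-- so*(2n): if at least two distinct values are repeated among the absolute values of the
coordinates of a dominant parameter with no zero coordinate, then no strictly decreasing
rearrangement-with-signs having at most one positive coordinate exists. -/
theorem stmt14 (n : ℕ) (hn : 2 ≤ n) (Λdom : ℕ → ℤ)
    (hdom : ∀ i j, 1 ≤ i → i ≤ j → j ≤ n - 1 → Λdom j ≤ Λdom i)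
    (hdomn : |Λdom n| ≤ Λdom (n - 1))
    (hzero : ∀ i, 1 ≤ i → i ≤ n → Λdom i ≠ 0)
    (hrep : ∃ i j k l, 1 ≤ i ∧ i < j ∧ j ≤ n ∧ 1 ≤ k ∧ k < l ∧ l ≤ n ∧
      |Λdom i| = |Λdom j| ∧ |Λdom k| = |Λdom l| ∧ |Λdom i| ≠ |Λdom k|) :
    ¬ ∃ Λ : ℕ → ℤ,
      (∀ i j, 1 ≤ i → i < j → j ≤ n → Λ j < Λ i) ∧
      ((Finset.Icc 1 n).val.map (fun i => |Λ i|) =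
        (Finset.Icc 1 n).val.map (fun i => |Λdom i|)) ∧
      ((Finset.Icc 1 n).filter (fun i => 0 < Λ i)).card ≤ 1 :=
  stmt14_general n Λdom hzero hrep
end

section
/- Let n ≥ 3 and ρ = (n-1, n-2, ..., 1, 0) ∈ ℤⁿ. For each q with 3 ≤ q ≤ n, the tuple Λ = (q-1, 0, -1, ..., -(q-2), -q, -(q+1), ..., -(n-1)) is strictly decreasing, is a conjugate of ρ under the Weyl group of type D_n (permutations with an even number of sign changes), and satisfies Λ_1 + Λ_2 = q - 1, i.e., the boundary of the unitarity condition Λ_1 + Λ_2 ≤ q-1 for the q-case. -/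
/-!
Read backwards, ρ is the staircase (0, 1, …, n-1). Applying the cycle (0 1 … q-1) to its
positions and negating every entry except the new first one gives Λ, so Λ is a signed
permutation of ρ. Since ρ has a zero entry, flipping the sign of that entry changes the
parity of the number of sign changes without changing Λ, which makes the parity even.
-/

open Finset

def IsWeylBConjugate {ι : Type*} (ρ Λ : ι → ℤ) : Prop :=
  ∃ (σ : Equiv.Perm ι) (ε : ι → ℤ), (∀ i, ε i = 1 ∨ ε i = -1) ∧ ∀ i, Λ i = ε i * ρ (σ i)

def IsWeylDConjugate {ι : Type*} [Fintype ι] (ρ Λ : ι → ℤ) : Prop :=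
  ∃ (σ : Equiv.Perm ι) (ε : ι → ℤ), (∀ i, ε i = 1 ∨ ε i = -1) ∧
    Even #{i | ε i = -1} ∧ ∀ i, Λ i = ε i * ρ (σ i)

theorem IsWeylBConjugate.isWeylDConjugate {ι : Type*} [Fintype ι] [DecidableEq ι]
    {ρ Λ : ι → ℤ} (h : IsWeylBConjugate ρ Λ) {j : ι} (hj : ρ j = 0) :
    IsWeylDConjugate ρ Λ := by
  obtain ⟨σ, ε, hε, hΛ⟩ := h
  by_cases hev : Even #{i | ε i = -1}
  · exact ⟨σ, ε, hε, hev, hΛ⟩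
  obtain ⟨i₀, rfl⟩ := σ.surjective j
  set ε' := Function.update ε i₀ (-ε i₀)
  have hε' : ∀ i, i ≠ i₀ → ε' i = ε i := fun i hi => Function.update_of_ne hi _ _
  refine ⟨σ, ε', fun i => ?_, ?_, fun i => ?_⟩
  · rcases eq_or_ne i i₀ with rfl | hi
    · rcases hε i with h | h <;> simp [ε', h]
    · simp [hε' i hi, hε i]
  · have hflip : ∀ {δ δ' : ι → ℤ}, δ i₀ ≠ -1 → δ' i₀ = -1 → (∀ i, i ≠ i₀ → δ' i = δ i) →
        #{i | δ' i = -1} = #{i | δ i = -1} + 1 := by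
      intro δ δ' hδ hδ' hδδ'
      rw [← card_insert_of_notMem (by simpa using hδ)]
      congr 1; ext i
      rcases eq_or_ne i i₀ with rfl | hi <;> simp [*]
    rcases hε i₀ with h | h
    · rw [hflip (by simp [h]) (by simp [ε', h]) hε', Nat.even_add_one]
      exact hev
    · have := hflip (δ := ε') (by simp [ε', h]) h (fun i hi => (hε' i hi).symm)
      rw [this, Nat.even_add_one, not_not] at hev
      exact hev
  · rcases eq_or_ne i i₀ with rfl | hi
    · simp [hΛ, hj]
    · simp [hε' i hi, hΛ]

def weylVectorD (n : ℕ) (i : Fin n) : ℤ := n - 1 - i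

def qBoundaryWeight (n q : ℕ) (i : Fin n) : ℤ :=
  if (i : ℕ) = 0 then q - 1 else if (i : ℕ) < q then 1 - i else -i

theorem weylVectorD_rev {n : ℕ} (i : Fin n) : weylVectorD n i.rev = i := by
  simp only [weylVectorD, Fin.val_rev]; omega

theorem strictAnti_qBoundaryWeight {n q : ℕ} (hq : 0 < q) : StrictAnti (qBoundaryWeight n q) := by
  intro i j hij
  have : (i : ℕ) < j := hij
  simp only [qBoundaryWeight]
  split_ifs <;> omega

theorem isWeylBConjugate_qBoundaryWeight {n q : ℕ} (hq : 0 < q) (hqn : q ≤ n) :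
    IsWeylBConjugate (weylVectorD n) (qBoundaryWeight n q) := by
  obtain ⟨c, hc⟩ : ∃ c : Fin n, (c : ℕ) = q - 1 := ⟨⟨q - 1, by omega⟩, rfl⟩
  have key : ∀ j, qBoundaryWeight n q (c.cycleRange j) =
      (if (c.cycleRange j : ℕ) = 0 then 1 else -1) * j := by
    intro j
    rcases lt_trichotomy j c with hjc | rfl | hcj
    · have : (j : ℕ) < c := hjc
      simp only [qBoundaryWeight, Fin.coe_cycleRange_of_lt hjc, Nat.add_one_ne_zero, if_false]
      split_ifs <;> omega
    · have : NeZero n := ⟨by omega⟩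
      simp only [qBoundaryWeight, Fin.cycleRange_self, Fin.val_zero, if_pos]
      omega
    · have : (c : ℕ) < j := hcj
      simp only [qBoundaryWeight, Fin.cycleRange_of_gt hcj]
      split_ifs <;> omega
  refine ⟨c.cycleRange.symm.trans Fin.revPerm, fun i => if (i : ℕ) = 0 then 1 else -1,
    fun i => by dsimp only; split_ifs <;> simp, fun i => ?_⟩
  simpa [weylVectorD_rev] using key (c.cycleRange.symm i)

/-- so*(2n), q-edge points of the Hasse diagram of ρ: the tuple
(q-1, 0, -1, ..., -(q-2), -q, ..., -(n-1)) is strictly decreasing, is a D_n Weyl group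
conjugate of ρ = (n-1, ..., 1, 0), and satisfies Λ_1 + Λ_2 = q - 1. -/
theorem stmt16 (n q : ℕ) (hn : 3 ≤ n) (hq3 : 3 ≤ q) (hqn : q ≤ n)
    (ρ Λ : Fin n → ℤ)
    (hρ : ∀ i : Fin n, ρ i = (n : ℤ) - 1 - ((i : ℕ) : ℤ))
    (hΛ : ∀ i : Fin n, Λ i = if (i : ℕ) = 0 then (q : ℤ) - 1
      else if (i : ℕ) < q then 1 - ((i : ℕ) : ℤ) else -((i : ℕ) : ℤ)) :
    (∀ i j : Fin n, i < j → Λ j < Λ i) ∧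
    (∃ (σ : Equiv.Perm (Fin n)) (ε : Fin n → ℤ),
      (∀ i, ε i = 1 ∨ ε i = -1) ∧
      Even ((Finset.univ.filter (fun i => ε i = -1)).card) ∧
      (∀ i, Λ i = ε i * ρ (σ i))) ∧
    Λ ⟨0, by omega⟩ + Λ ⟨1, by omega⟩ = (q : ℤ) - 1 := by
  obtain rfl : ρ = weylVectorD n := funext hρ
  obtain rfl : Λ = qBoundaryWeight n q := funext hΛ
  refine ⟨fun i j hij => strictAnti_qBoundaryWeight (by omega) hij, ?_, ?_⟩
  · have hzero : weylVectorD n ⟨n - 1, by omega⟩ = 0 := by simp only [weylVectorD]; omega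
    exact (isWeylBConjugate_qBoundaryWeight (by omega) hqn).isWeylDConjugate hzero
  · simp [qBoundaryWeight, show 1 < q by omega]
end

section
/- Let n = p + q, p ≤ q, and let Λ^dom ∈ ℤⁿ be strictly decreasing (regular) with Λ^dom_q ≠ Λ^dom_{q+1} + 1. Then the only rearrangement Λ of the coordinates of Λ^dom with strictly decreasing first p coordinates, strictly decreasing last q coordinates, and satisfying the su(p,q) unitarity condition (existence of p' ∈ [1,p], q' ∈ [1,q] such that the first p' coordinates and last q' coordinates are strings of consecutive integers decreasing by 1, Λ_{p'+1} < Λ_1 - p', Λ_{n-q'} > Λ_n + q', and Λ_{p'} - Λ_{n-q'+1} ≤ 1) is Λ = (Λ^dom_{q+1}, ..., Λ^dom_n | Λ^dom_1, ..., Λ^dom_q). -/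
/-!
The gap `Λdom q ≥ Λdom (q + 1) + 2` leaves the integer `v = Λdom (q + 1) + 1` out of the
coordinates, splitting them into `q` large values above `v` and `p` small values below it.
A string of consecutive integers cannot jump over `v`, so if `Λ 1 > v > Λ n` the left string would
end above `v` and the right string would start below it, contradicting `Λ p' ≤ Λ (n - q' + 1) + 1`.
Hence `Λ 1 < v` or `v < Λ n`; by monotonicity and counting the left block then consists of the small
values and the right block of the large ones, and a strictly decreasing block is determined by its
multiset of values.
-/

theorem Nat.val_Icc_add_one_add (b k : ℕ) :
    (Finset.Icc (b + 1) (b + k)).val = List.range' (b + 1) k := by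
  rw [Nat.Icc_eq_range', show b + k + 1 - (b + 1) = k by omega]

theorem List.sortedGT_map_range'_of_strictAntiOn {α : Type*} [Preorder α] {f : ℕ → α} {b k : ℕ}
    (hf : StrictAntiOn f (Set.Icc (b + 1) (b + k))) :
    ((List.range' (b + 1) k).map f).SortedGT := by
  rw [List.sortedGT_iff_pairwise, List.pairwise_map]
  refine List.Pairwise.imp_of_mem (fun hx hy hxy => hf ?_ ?_ hxy) List.pairwise_lt_range' <;>
    · rw [List.mem_range'_1] at *; constructor <;> omega

theorem StrictAntiOn.apply_add_eq_of_map_eq {α : Type*} [LinearOrder α] {f g : ℕ → α}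
    {a c k : ℕ} (hf : StrictAntiOn f (Set.Icc (a + 1) (a + k)))
    (hg : StrictAntiOn g (Set.Icc (c + 1) (c + k)))
    (h : (Finset.Icc (a + 1) (a + k)).val.map f = (Finset.Icc (c + 1) (c + k)).val.map g)
    {i : ℕ} (hi : i ∈ Set.Icc 1 k) : f (a + i) = g (c + i) := by
  rw [Nat.val_Icc_add_one_add, Nat.val_Icc_add_one_add, Multiset.map_coe, Multiset.map_coe,
    Multiset.coe_eq_coe] at h
  have hlist := h.eq_of_sortedGE (List.sortedGT_map_range'_of_strictAntiOn hf).sortedGE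
    (List.sortedGT_map_range'_of_strictAntiOn hg).sortedGE
  have := congrArg (·[i - 1]?) hlist
  simp only [List.getElem?_map, List.getElem?_range' (show i - 1 < k by grind), Option.map_some,
    Option.some.injEq] at this
  grind

theorem Multiset.map_filter_eq_of_map_eq {ι α : Type*} {s : Multiset ι} {f g : ι → α}
    (h : s.map f = s.map g) (P : α → Prop) [DecidablePred P] :
    (s.filter fun i => P (f i)).map f = (s.filter fun i => P (g i)).map g := by
  simpa only [Multiset.filter_map, Function.comp_def] using congrArg (Multiset.filter P) h

theorem Finset.card_filter_eq_of_map_eq {ι α : Type*} {s : Finset ι} {f g : ι → α}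
    (h : s.val.map f = s.val.map g) (P : α → Prop) [DecidablePred P] :
    (s.filter fun i => P (f i)).card = (s.filter fun i => P (g i)).card := by
  have := congrArg Multiset.card (Multiset.map_filter_eq_of_map_eq h P)
  rwa [Multiset.card_map, Multiset.card_map] at this

theorem Finset.map_val_eq_of_filter_eq {ι α : Type*} [DecidableEq ι] {s A B : Finset ι}
    {f g : ι → α} (h : s.val.map f = s.val.map g) (P : α → Prop) [DecidablePred P]
    (hA : s.filter (fun i => P (f i)) = A) (hB : s.filter (fun i => P (g i)) = B) :
    A.val.map f = B.val.map g ∧ (s \ A).val.map f = (s \ B).val.map g := by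
  subst hA hB
  simp only [← Finset.filter_not, Finset.filter_val]
  exact ⟨Multiset.map_filter_eq_of_map_eq h P, Multiset.map_filter_eq_of_map_eq h (¬ P ·)⟩

theorem StrictAntiOn.blocks_eq_of_filter_eq {α : Type*} [LinearOrder α] {f g : ℕ → α} {p q : ℕ}
    (hL : StrictAntiOn f (Set.Icc 1 p)) (hR : StrictAntiOn f (Set.Icc (p + 1) (p + q)))
    (hg : StrictAntiOn g (Set.Icc 1 (p + q)))
    (h : (Finset.Icc 1 (p + q)).val.map f = (Finset.Icc 1 (p + q)).val.map g)
    (P : α → Prop) [DecidablePred P]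
    (hfP : (Finset.Icc 1 (p + q)).filter (fun i => P (f i)) = Finset.Icc 1 p)
    (hgP : (Finset.Icc 1 (p + q)).filter (fun i => P (g i)) = Finset.Icc (q + 1) (p + q)) :
    (∀ i ∈ Set.Icc 1 p, f i = g (q + i)) ∧ (∀ j ∈ Set.Icc 1 q, f (p + j) = g j) := by
  obtain ⟨hleft, hright⟩ := Finset.map_val_eq_of_filter_eq h P hfP hgP
  rw [show Finset.Icc 1 (p + q) \ Finset.Icc 1 p = Finset.Icc (p + 1) (p + q) by
      ext; simp only [Finset.mem_sdiff, Finset.mem_Icc]; omega,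
    show Finset.Icc 1 (p + q) \ Finset.Icc (q + 1) (p + q) = Finset.Icc 1 q by
      ext; simp only [Finset.mem_sdiff, Finset.mem_Icc]; omega] at hright
  refine ⟨fun i hi => ?_, fun j hj => ?_⟩
  · simpa using StrictAntiOn.apply_add_eq_of_map_eq (a := 0) (c := q) (k := p)
      (by simpa using hL) (hg.mono (Set.Icc_subset_Icc (by omega) (by omega)))
      (by simpa [add_comm] using hleft) hi
  · simpa using StrictAntiOn.apply_add_eq_of_map_eq (a := p) (c := 0) (k := q) hR
      (hg.mono (Set.Icc_subset_Icc (by omega) (by omega))) (by simpa using hright) hj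

def IsString (f : ℕ → ℤ) (a b : ℕ) : Prop :=
  ∀ i, a ≤ i → i < b → f (i + 1) = f i - 1

namespace IsString

variable {f : ℕ → ℤ} {a b : ℕ}

theorem apply_add (h : IsString f a b) {t : ℕ} (ht : a + t ≤ b) : f (a + t) = f a - t := by
  induction t with
  | zero => simp
  | succ t ih =>
    rw [← add_assoc, h (a + t) (by omega) (by omega), ih (by omega)]
    push_cast
    ring

theorem exists_apply_eq (h : IsString f a b) (hab : a ≤ b) {v : ℤ} (hb : f b ≤ v)
    (ha : v ≤ f a) : ∃ i ∈ Set.Icc a b, f i = v := by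
  have hlen := h.apply_add (t := b - a) (by omega)
  rw [Nat.add_sub_cancel' hab] at hlen
  refine ⟨a + (f a - v).toNat, ⟨by omega, by omega⟩, ?_⟩
  rw [h.apply_add (by omega)]
  omega

end IsString

theorem lt_or_lt_of_isString {f : ℕ → ℤ} {a b c d : ℕ} {v : ℤ}
    (hl : IsString f a b) (hr : IsString f c d) (hab : a ≤ b) (hcd : c ≤ d)
    (hjoin : f b ≤ f c + 1) (hla : ∀ i ∈ Set.Icc a b, f i ≠ v)
    (hra : ∀ i ∈ Set.Icc c d, f i ≠ v) :
    f a < v ∨ v < f d := by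
  by_contra! hcon
  have ha : v < f a := lt_of_le_of_ne hcon.1 (hla a ⟨le_rfl, hab⟩).symm
  have hd : f d < v := lt_of_le_of_ne hcon.2 (hra d ⟨hcd, le_rfl⟩)
  have hb : v < f b := by
    by_contra! hb
    obtain ⟨i, hi, hfi⟩ := hl.exists_apply_eq hab hb ha.le
    exact hla i hi hfi
  have hc : f c < v := by
    by_contra! hc
    obtain ⟨i, hi, hfi⟩ := hr.exists_apply_eq hcd hd.le hc
    exact hra i hi hfi
  omega

theorem Finset.filter_lt_eq_Icc_one_of_card {f : ℕ → ℤ} {v : ℤ} {p n : ℕ} (hpn : p ≤ n)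
    (hL : StrictAntiOn f (Set.Icc 1 p)) (hR : StrictAntiOn f (Set.Icc (p + 1) n))
    (hcard : ((Finset.Icc 1 n).filter fun i => f i < v).card = p) (hends : f 1 < v ∨ v < f n) :
    (Finset.Icc 1 n).filter (fun i => f i < v) = Finset.Icc 1 p := by
  rcases hends with h1 | hn
  · refine (Finset.eq_of_subset_of_card_le (fun i hi => ?_) (by simp [hcard])).symm
    rw [Finset.mem_Icc] at hi
    have := hL.antitoneOn ⟨le_rfl, by omega⟩ ⟨hi.1, hi.2⟩ hi.1
    simp only [Finset.mem_filter, Finset.mem_Icc]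
    exact ⟨⟨hi.1, by omega⟩, by omega⟩
  · refine Finset.eq_of_subset_of_card_le (fun i hi => ?_) (by simp [hcard])
    simp only [Finset.mem_filter, Finset.mem_Icc] at hi ⊢
    by_contra! hpi
    have := hR.antitoneOn ⟨by omega, hi.1.2⟩ ⟨by omega, le_rfl⟩ hi.1.2
    omega

section Gap

variable {f : ℕ → ℤ} {n q i : ℕ}

theorem StrictAntiOn.apply_lt_gap (hf : StrictAntiOn f (Set.Icc 1 n)) (hi : i ∈ Set.Icc (q + 1) n) :
    f i < f (q + 1) + 1 := by
  obtain ⟨hqi, hin⟩ := hi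
  have := hf.antitoneOn ⟨by omega, by omega⟩ ⟨by omega, hin⟩ hqi
  omega

theorem StrictAntiOn.gap_lt_apply (hf : StrictAntiOn f (Set.Icc 1 n))
    (hgap : f q ≠ f (q + 1) + 1) (hqn : q < n) (hi : i ∈ Set.Icc 1 q) :
    f (q + 1) + 1 < f i := by
  obtain ⟨hi1, hiq⟩ := hi
  have hstep : f (q + 1) < f q := hf ⟨by omega, by omega⟩ ⟨by omega, hqn⟩ (by omega : q < q + 1)
  have := hf.antitoneOn ⟨hi1, by omega⟩ ⟨by omega, by omega⟩ hiq
  omega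

theorem StrictAntiOn.apply_ne_gap (hf : StrictAntiOn f (Set.Icc 1 n))
    (hgap : f q ≠ f (q + 1) + 1) (hqn : q < n) (hi : i ∈ Finset.Icc 1 n) :
    f i ≠ f (q + 1) + 1 := by
  rw [Finset.mem_Icc] at hi
  rcases lt_or_ge q i with hqi | hiq
  · exact (hf.apply_lt_gap ⟨hqi, hi.2⟩).ne
  · exact (hf.gap_lt_apply hgap hqn ⟨hi.1, hiq⟩).ne'

theorem StrictAntiOn.filter_lt_gap (hf : StrictAntiOn f (Set.Icc 1 n))
    (hgap : f q ≠ f (q + 1) + 1) (hqn : q < n) :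
    (Finset.Icc 1 n).filter (fun i => f i < f (q + 1) + 1) = Finset.Icc (q + 1) n := by
  ext i
  simp only [Finset.mem_filter, Finset.mem_Icc]
  constructor
  · rintro ⟨hi, hlt⟩
    by_contra! hiq
    exact (hf.gap_lt_apply hgap hqn ⟨hi.1, by omega⟩).asymm hlt
  · rintro ⟨hqi, hin⟩
    exact ⟨⟨by omega, hin⟩, hf.apply_lt_gap ⟨hqi, hin⟩⟩

end Gap

theorem stmt18_general (p q n : ℕ) (hn : n = p + q)
    (Λdom : ℕ → ℤ)
    (hdom : ∀ i j, 1 ≤ i → i < j → j ≤ n → Λdom j < Λdom i)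
    (hgap : Λdom q ≠ Λdom (q + 1) + 1)
    (Λ : ℕ → ℤ)
    (hperm : (Finset.Icc 1 n).val.map Λ = (Finset.Icc 1 n).val.map Λdom)
    (hL : ∀ i j, 1 ≤ i → i < j → j ≤ p → Λ j < Λ i)
    (hR : ∀ i j, p + 1 ≤ i → i < j → j ≤ n → Λ j < Λ i)
    (hunit : ∃ p' q', 1 ≤ p' ∧ p' ≤ p ∧ 1 ≤ q' ∧ q' ≤ q ∧
      (∀ i, 1 ≤ i → i < p' → Λ (i + 1) = Λ i - 1) ∧
      (∀ i, n - q' + 1 ≤ i → i < n → Λ (i + 1) = Λ i - 1) ∧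
      (p' < p → Λ (p' + 1) < Λ 1 - (p' : ℤ)) ∧
      (q' < q → Λ (n - q') > Λ n + (q' : ℤ)) ∧
      Λ p' ≤ Λ (n - q' + 1) + 1) :
    (∀ i, 1 ≤ i → i ≤ p → Λ i = Λdom (q + i)) ∧
    (∀ j, 1 ≤ j → j ≤ q → Λ (p + j) = Λdom j) := by
  obtain ⟨p', q', hp', hp'p, hq', hq'q, hls, hrs, -, -, hjoin⟩ := hunit
  subst hn
  have hdom' : StrictAntiOn Λdom (Set.Icc 1 (p + q)) := fun i hi j hj hij =>
    hdom i j hi.1 hij hj.2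
  have hL' : StrictAntiOn Λ (Set.Icc 1 p) := fun i hi j hj hij => hL i j hi.1 hij hj.2
  have hR' : StrictAntiOn Λ (Set.Icc (p + 1) (p + q)) := fun i hi j hj hij =>
    hR i j hi.1 hij hj.2
  have hdom_filter := hdom'.filter_lt_gap hgap (by omega)
  have hΛ_ne : ∀ i ∈ Finset.Icc 1 (p + q), Λ i ≠ Λdom (q + 1) + 1 := by
    intro i hi
    obtain ⟨j, hj, hji⟩ := Multiset.mem_map.mp (hperm ▸ Multiset.mem_map_of_mem Λ hi)
    exact hji ▸ hdom'.apply_ne_gap hgap (by omega) hj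
  have hends := lt_or_lt_of_isString (f := Λ) (a := 1) (b := p') (c := p + q - q' + 1)
    hls hrs hp' (by omega) hjoin (fun i hi => hΛ_ne i (by grind))
    (fun i hi => hΛ_ne i (by grind))
  have hcard := Finset.card_filter_eq_of_map_eq hperm (· < Λdom (q + 1) + 1)
  rw [hdom_filter, Nat.card_Icc] at hcard
  have hΛ_filter := Finset.filter_lt_eq_Icc_one_of_card (by omega) hL' hR' (by omega) hends
  obtain ⟨hleft, hright⟩ := hL'.blocks_eq_of_filter_eq hR' hdom' hperm
    (· < Λdom (q + 1) + 1) hΛ_filter hdom_filter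
  exact ⟨fun i h1 h2 => hleft i ⟨h1, h2⟩, fun j h1 h2 => hright j ⟨h1, h2⟩⟩

/-- su(p,q), regular integral case with Λdom_q ≠ Λdom_{q+1} + 1: the only unitary
rearrangement is (Λdom_{q+1}, ..., Λdom_n | Λdom_1, ..., Λdom_q). -/
theorem stmt18 (p q n : ℕ) (hn : n = p + q) (hp : 1 ≤ p) (hpq : p ≤ q)
    (Λdom : ℕ → ℤ)
    (hdom : ∀ i j, 1 ≤ i → i < j → j ≤ n → Λdom j < Λdom i)
    (hgap : Λdom q ≠ Λdom (q + 1) + 1)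
    (Λ : ℕ → ℤ)
    (hperm : (Finset.Icc 1 n).val.map Λ = (Finset.Icc 1 n).val.map Λdom)
    (hL : ∀ i j, 1 ≤ i → i < j → j ≤ p → Λ j < Λ i)
    (hR : ∀ i j, p + 1 ≤ i → i < j → j ≤ n → Λ j < Λ i)
    (hunit : ∃ p' q', 1 ≤ p' ∧ p' ≤ p ∧ 1 ≤ q' ∧ q' ≤ q ∧
      (∀ i, 1 ≤ i → i < p' → Λ (i + 1) = Λ i - 1) ∧
      (∀ i, n - q' + 1 ≤ i → i < n → Λ (i + 1) = Λ i - 1) ∧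
      (p' < p → Λ (p' + 1) < Λ 1 - (p' : ℤ)) ∧
      (q' < q → Λ (n - q') > Λ n + (q' : ℤ)) ∧
      Λ p' ≤ Λ (n - q' + 1) + 1) :
    (∀ i, 1 ≤ i → i ≤ p → Λ i = Λdom (q + i)) ∧
    (∀ j, 1 ≤ j → j ≤ q → Λ (p + j) = Λdom j) :=
  stmt18_general p q n hn Λdom hdom hgap Λ hperm hL hR hunit
end
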